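/- arXiv:2012.07650 — 6 statements merged into one kernel-verified Lean document; each statement's English description precedes it below -/
import Mathlib

section
/- For all x, y in ℝ^n and 1 < p < 2, there exists a constant c_p > 0 (depending only on p) such that ⟨|x|^{p-2}x - |y|^{p-2}y, x - y⟩ ≥ c_p |x - y|^2 (|x| + |y|)^{p-2}, whenever (x,y) ≠ (0,0). -/
/-!
Write `a = ‖x‖`, `b = ‖y‖` and `s = ‖x‖‖y‖ - ⟪x, y⟫ ≥ 0`. Then
`‖x - y‖² = (a - b)² + 2s` and
`⟪αx - βy, x - y⟫ = (αa - βb)(a - b) + (α + β)s`,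
so the inequality splits into a radial part, which is the one-dimensional statement
`(p-1)(a+b)^(p-2)(a-b)² ≤ (a^(p-1) - b^(p-1))(a - b)` (concavity of `t ↦ t^(p-1)`), and an
angular part, which reduces to `2(p-1)(a+b)^(p-2) ≤ a^(p-2) + b^(p-2)` since `p - 2 < 0`.
-/

open RealInnerProductSpace

namespace Real

lemma rpow_sub_two_mul_self {a p : ℝ} (ha : 0 ≤ a) (hp : p ≠ 1) :
    a ^ (p - 2) * a = a ^ (p - 1) := by
  rw [← rpow_add_one' ha (by contrapose! hp; linarith)]
  ring_nf

lemma mul_rpow_sub_one_mul_sub_le_rpow_sub_rpow {q a b : ℝ} (hq0 : 0 ≤ q) (hq1 : q ≤ 1)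
    (ha : 0 < a) (hb : 0 ≤ b) :
    q * a ^ (q - 1) * (a - b) ≤ a ^ q - b ^ q := by
  have amgm : b ^ q * a ^ (1 - q) ≤ q * b + (1 - q) * a :=
    geom_mean_le_arith_mean2_weighted hq0 (by linarith) hb ha.le (by ring)
  have hinv : a ^ (1 - q) * a ^ (q - 1) = 1 := by
    rw [← rpow_add ha]; simp
  have hself : a ^ (q - 1) * a = a ^ q := by
    rw [← rpow_add_one ha.ne']; ring_nf
  linear_combination mul_le_mul_of_nonneg_right amgm (rpow_nonneg ha.le (q - 1))
    + hself - b ^ q * hinv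

lemma mul_add_rpow_sub_one_mul_sub_sq_le {q a b : ℝ} (hq0 : 0 ≤ q) (hq1 : q ≤ 1)
    (ha : 0 ≤ a) (hb : 0 ≤ b) (hab : 0 < a + b) :
    q * (a + b) ^ (q - 1) * (a - b) ^ 2 ≤ (a ^ q - b ^ q) * (a - b) := by
  wlog hba : b ≤ a generalizing a b
  · have := this hb ha (by linarith) (by linarith)
    rw [add_comm] at this
    linarith
  have ha' : 0 < a := by linarith
  have hpow : (a + b) ^ (q - 1) ≤ a ^ (q - 1) :=
    rpow_le_rpow_of_nonpos ha' (by linarith) (by linarith)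
  have tangent := mul_rpow_sub_one_mul_sub_le_rpow_sub_rpow hq0 hq1 ha' hb
  calc q * (a + b) ^ (q - 1) * (a - b) ^ 2
      ≤ q * a ^ (q - 1) * (a - b) * (a - b) := by
        linear_combination mul_le_mul_of_nonneg_left hpow (mul_nonneg hq0 (sq_nonneg (a - b)))
    _ ≤ (a ^ q - b ^ q) * (a - b) := mul_le_mul_of_nonneg_right tangent (by linarith)

lemma two_mul_add_rpow_le_rpow_add_rpow {r a b : ℝ} (hr : r ≤ 0) (ha : 0 < a) (hb : 0 < b) :
    2 * (a + b) ^ r ≤ a ^ r + b ^ r := by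
  have hA : (a + b) ^ r ≤ a ^ r := rpow_le_rpow_of_nonpos ha (by linarith) hr
  have hB : (a + b) ^ r ≤ b ^ r := rpow_le_rpow_of_nonpos hb (by linarith) hr
  linarith

end Real

section InnerProductSpace

variable {E : Type*} [NormedAddCommGroup E] [InnerProductSpace ℝ E]

lemma norm_sub_sq_eq_norm_sub_norm_sq_add (x y : E) :
    ‖x - y‖ ^ 2 = (‖x‖ - ‖y‖) ^ 2 + 2 * (‖x‖ * ‖y‖ - ⟪x, y⟫) := by
  rw [norm_sub_sq_real]; ring

lemma inner_smul_sub_smul_sub_eq (α β : ℝ) (x y : E) :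
    ⟪α • x - β • y, x - y⟫ =
      (α * ‖x‖ - β * ‖y‖) * (‖x‖ - ‖y‖) + (α + β) * (‖x‖ * ‖y‖ - ⟪x, y⟫) := by
  simp only [inner_sub_left, inner_sub_right, real_inner_smul_left,
    real_inner_self_eq_norm_sq, real_inner_comm x y]
  ring

lemma sub_one_mul_norm_sub_sq_mul_le_inner {p : ℝ} (hp1 : 1 < p) (hp2 : p < 2) {x y : E}
    (hxy : 0 < ‖x‖ + ‖y‖) :
    (p - 1) * ‖x - y‖ ^ 2 * (‖x‖ + ‖y‖) ^ (p - 2) ≤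
      ⟪‖x‖ ^ (p - 2) • x - ‖y‖ ^ (p - 2) • y, x - y⟫ := by
  have radial : (p - 1) * (‖x‖ + ‖y‖) ^ (p - 2) * (‖x‖ - ‖y‖) ^ 2 ≤
      (‖x‖ ^ (p - 2) * ‖x‖ - ‖y‖ ^ (p - 2) * ‖y‖) * (‖x‖ - ‖y‖) := by
    rw [Real.rpow_sub_two_mul_self (norm_nonneg x) hp1.ne',
      Real.rpow_sub_two_mul_self (norm_nonneg y) hp1.ne',
      show p - 2 = p - 1 - 1 by ring]
    exact Real.mul_add_rpow_sub_one_mul_sub_sq_le (by linarith) (by linarith)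
      (norm_nonneg x) (norm_nonneg y) hxy
  have angular : 2 * (p - 1) * (‖x‖ + ‖y‖) ^ (p - 2) * (‖x‖ * ‖y‖ - ⟪x, y⟫) ≤
      (‖x‖ ^ (p - 2) + ‖y‖ ^ (p - 2)) * (‖x‖ * ‖y‖ - ⟪x, y⟫) := by
    -- `0 ^ (p - 2) = 0` spoils the bound on the left factor, but then the right factor vanishes
    rcases eq_or_ne x 0 with rfl | hx
    · simp
    rcases eq_or_ne y 0 with rfl | hy
    · simp
    gcongr
    · exact sub_nonneg.2 (real_inner_le_norm x y)
    · have := Real.two_mul_add_rpow_le_rpow_add_rpow (r := p - 2) (by linarith)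
        (norm_pos_iff.2 hx) (norm_pos_iff.2 hy)
      nlinarith [Real.rpow_nonneg hxy.le (p - 2)]
  rw [norm_sub_sq_eq_norm_sub_norm_sq_add, inner_smul_sub_smul_sub_eq]
  linear_combination radial + angular

end InnerProductSpace

/-- Monotonicity of the p-Laplacian vector field for `1 < p < 2`. -/
theorem monotonicity_pLaplacian_singular (n : ℕ) (p : ℝ) (hp1 : 1 < p) (hp2 : p < 2) :
    ∃ c : ℝ, 0 < c ∧ ∀ x y : EuclideanSpace ℝ (Fin n), ¬(x = 0 ∧ y = 0) →
      c * ‖x - y‖ ^ (2 : ℝ) * (‖x‖ + ‖y‖) ^ (p - 2)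
        ≤ (inner ℝ ((‖x‖ ^ (p - 2)) • x - (‖y‖ ^ (p - 2)) • y) (x - y) : ℝ) := by
  refine ⟨p - 1, by linarith, fun x y hxy => ?_⟩
  have hpos : 0 < ‖x‖ + ‖y‖ := by
    rcases not_and_or.1 hxy with hx | hy
    · exact add_pos_of_pos_of_nonneg (norm_pos_iff.2 hx) (norm_nonneg y)
    · exact add_pos_of_nonneg_of_pos (norm_nonneg x) (norm_pos_iff.2 hy)
  rw [Real.rpow_two]
  exact sub_one_mul_norm_sub_sq_mul_le_inner hp1 hp2 hpos
end

section
/- For all x, y in ℝ^n and 1 < p < 2, ⟨|x|^{p-2}x - |y|^{p-2}y, x - y⟩ ≥ c_p |x - y|^2 (1 + |x| + |y|)^{p-2} for some constant c_p > 0 depending only on p. -/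
/-!
Write `a = ‖x‖`, `b = ‖y‖`, `t = ⟪x, y⟫`. Both sides of the sharper inequality
`(p - 1) ‖x - y‖² (a + b)^(p-2) ≤ ⟪a^(p-2) x - b^(p-2) y, x - y⟫` are affine in `t`, and
`|t| ≤ a b`, so it suffices to check the endpoints. At `t = a b` it is the mean value theorem for
`s ↦ s^(p-1)`, whose derivative decreases, so that it is at least `(p - 1) (a + b)^(p-2)` on
`[b, a]`;
at `t = -a b` it is the subadditivity of `s ↦ s^(p-1)`. Since `p - 2 < 0`,
`(1 + a + b)^(p-2) ≤ (a + b)^(p-2)`, and `c = p - 1` works.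
-/

open Real

lemma mul_sub_mul_rpow_le_rpow_sub_rpow {q a b : ℝ} (hq0 : 0 < q) (hq1 : q ≤ 1) (hb : 0 ≤ b)
    (hba : b ≤ a) : q * (a - b) * (a + b) ^ (q - 1) ≤ a ^ q - b ^ q := by
  rcases hba.eq_or_lt with rfl | hba
  · simp
  obtain ⟨ξ, ⟨hbξ, hξa⟩, hξ⟩ := exists_hasDerivAt_eq_slope (fun t ↦ t ^ q)
    (fun t ↦ q * t ^ (q - 1)) hba
    (fun t _ ↦ (continuousAt_rpow_const t q (Or.inr hq0.le)).continuousWithinAt)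
    (fun t ht ↦ hasDerivAt_rpow_const (Or.inl (hb.trans_lt ht.1).ne'))
  have hξ_pos : 0 < ξ := hb.trans_lt hbξ
  have hmono : (a + b) ^ (q - 1) ≤ ξ ^ (q - 1) :=
    rpow_le_rpow_of_nonpos hξ_pos (by linarith) (by linarith)
  rw [eq_div_iff (sub_pos.2 hba).ne'] at hξ
  rw [← hξ]
  nlinarith [mul_le_mul_of_nonneg_left hmono (mul_nonneg hq0.le (sub_pos.2 hba).le)]

lemma mul_sub_sq_mul_rpow_le_rpow_sub_rpow_mul_sub {q a b : ℝ} (hq0 : 0 < q) (hq1 : q ≤ 1)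
    (ha : 0 ≤ a) (hb : 0 ≤ b) :
    q * (a - b) ^ 2 * (a + b) ^ (q - 1) ≤ (a ^ q - b ^ q) * (a - b) := by
  rcases le_total b a with hba | hab
  · nlinarith [mul_le_mul_of_nonneg_right (mul_sub_mul_rpow_le_rpow_sub_rpow hq0 hq1 hb hba)
      (sub_nonneg.2 hba)]
  · have h := mul_sub_mul_rpow_le_rpow_sub_rpow hq0 hq1 ha hab
    rw [add_comm] at h
    nlinarith [mul_le_mul_of_nonneg_right h (sub_nonneg.2 hab)]

lemma mul_le_of_abs_le {A B r t : ℝ} (hpos : B * r ≤ A) (hneg : -(B * r) ≤ A)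
    (ht : |t| ≤ r) : B * t ≤ A := by
  obtain ⟨htl, htr⟩ := abs_le.mp ht
  rcases le_total 0 B with hB | hB <;> nlinarith

lemma sub_one_mul_mul_rpow_le_of_abs_le {p a b t : ℝ} (hp1 : 1 < p) (hp2 : p ≤ 2)
    (ha : 0 ≤ a) (hb : 0 ≤ b) (ht : |t| ≤ a * b) :
    (p - 1) * (a ^ 2 + b ^ 2 - 2 * t) * (a + b) ^ (p - 2)
      ≤ a ^ (p - 2) * a ^ 2 + b ^ (p - 2) * b ^ 2 - (a ^ (p - 2) + b ^ (p - 2)) * t := by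
  have hexp : p - 2 + 1 ≠ 0 := by linarith
  have hpa := rpow_add_one' ha hexp
  have hpb := rpow_add_one' hb hexp
  have hpab := rpow_add_one' (add_nonneg ha hb) hexp
  rw [show p - 2 + 1 = p - 1 by ring] at hpa hpb hpab
  have hsub := mul_sub_sq_mul_rpow_le_rpow_sub_rpow_mul_sub (q := p - 1) (by linarith)
    (by linarith) ha hb
  rw [show p - 1 - 1 = p - 2 by ring] at hsub
  have hadd := rpow_add_le_add_rpow ha hb (p := p - 1) (by linarith) (by linarith)
  suffices (a ^ (p - 2) + b ^ (p - 2) - 2 * (p - 1) * (a + b) ^ (p - 2)) * t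
      ≤ a ^ (p - 2) * a ^ 2 + b ^ (p - 2) * b ^ 2
        - (p - 1) * (a ^ 2 + b ^ 2) * (a + b) ^ (p - 2) by
    linarith
  refine mul_le_of_abs_le ?_ ?_ ht
  · linear_combination hsub + (a - b) * hpa - (a - b) * hpb
  · have hsum_le := mul_le_mul_of_nonneg_left hadd (add_nonneg ha hb)
    have hp_le : 0 ≤ (2 - p) * ((a + b) * (a + b) ^ (p - 1)) :=
      mul_nonneg (by linarith) (by positivity)
    linear_combination hsum_le + hp_le + (a + b) * hpa + (a + b) * hpb - (p - 1) * (a + b) * hpab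

theorem sub_one_mul_norm_sub_sq_mul_rpow_le_inner {E : Type*} [NormedAddCommGroup E]
    [InnerProductSpace ℝ E] {p : ℝ} (hp1 : 1 < p) (hp2 : p ≤ 2) (x y : E) :
    (p - 1) * ‖x - y‖ ^ 2 * (‖x‖ + ‖y‖) ^ (p - 2)
      ≤ inner ℝ (‖x‖ ^ (p - 2) • x - ‖y‖ ^ (p - 2) • y) (x - y) := by
  have hinner : inner ℝ (‖x‖ ^ (p - 2) • x - ‖y‖ ^ (p - 2) • y) (x - y)
      = ‖x‖ ^ (p - 2) * ‖x‖ ^ 2 + ‖y‖ ^ (p - 2) * ‖y‖ ^ 2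
        - (‖x‖ ^ (p - 2) + ‖y‖ ^ (p - 2)) * inner ℝ x y := by
    simp only [inner_sub_left, inner_sub_right, real_inner_smul_left,
      real_inner_self_eq_norm_sq, real_inner_comm y x]
    ring
  rw [hinner, norm_sub_sq_real]
  convert sub_one_mul_mul_rpow_le_of_abs_le hp1 hp2 (norm_nonneg x) (norm_nonneg y)
    (abs_real_inner_le_norm x y) using 2
  ring

/-- Monotonicity of the p-Laplacian vector field for `1 < p < 2`, weak form. -/
theorem monotonicity_pLaplacian_singular_weak (n : ℕ) (p : ℝ) (hp1 : 1 < p) (hp2 : p < 2) :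
    ∃ c : ℝ, 0 < c ∧ ∀ x y : EuclideanSpace ℝ (Fin n),
      c * ‖x - y‖ ^ (2 : ℝ) * (1 + ‖x‖ + ‖y‖) ^ (p - 2)
        ≤ (inner ℝ ((‖x‖ ^ (p - 2)) • x - (‖y‖ ^ (p - 2)) • y) (x - y) : ℝ) := by
  refine ⟨p - 1, by linarith, fun x y ↦ ?_⟩
  rcases eq_or_ne x y with rfl | hxy
  · simp
  have hsum_pos : 0 < ‖x‖ + ‖y‖ :=
    (norm_pos_iff.2 (sub_ne_zero.2 hxy)).trans_le (norm_sub_le x y)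
  have hweight : (1 + ‖x‖ + ‖y‖) ^ (p - 2) ≤ (‖x‖ + ‖y‖) ^ (p - 2) :=
    rpow_le_rpow_of_nonpos hsum_pos (by linarith) (by linarith)
  rw [rpow_two]
  calc (p - 1) * ‖x - y‖ ^ 2 * (1 + ‖x‖ + ‖y‖) ^ (p - 2)
      ≤ (p - 1) * ‖x - y‖ ^ 2 * (‖x‖ + ‖y‖) ^ (p - 2) := by gcongr
    _ ≤ _ := sub_one_mul_norm_sub_sq_mul_rpow_le_inner hp1 hp2.le x y
end

section
/- For all x, y in ℝ^n and p ≥ 2, there exists c_p > 0 depending only on p such that |y|^p ≥ |x|^p + p |x|^{p-2} ⟨x, y - x⟩ + c_p |y - x|^p. -/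
/-!
Write `m = (x + y) / 2`. Clarkson's inequality `‖x + y‖ ^ p + ‖x - y‖ ^ p ≤ 2 ^ (p - 1) (‖x‖ ^ p + ‖y‖ ^ p)`
follows from the parallelogram law, since `t ↦ t ^ (p / 2)` is superadditive and convex; it says that
`‖m‖ ^ p ≤ (‖x‖ ^ p + ‖y‖ ^ p) / 2 - 2 ^ (-p) ‖y - x‖ ^ p`. The tangent-line inequality for the convex
function `‖·‖ ^ p` at `x`, evaluated at `m`, bounds `‖m‖ ^ p` from below by
`‖x‖ ^ p + (p / 2) ‖x‖ ^ (p - 2) ⟪x, y - x⟫`. Comparing the two bounds gives the inequality with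
`c = 2 ^ (1 - p)`.
-/

open Real

namespace Real

lemma rpow_add_le_mul_rpow_add_rpow {a b q : ℝ} (ha : 0 ≤ a) (hb : 0 ≤ b) (hq : 1 ≤ q) :
    (a + b) ^ q ≤ 2 ^ (q - 1) * (a ^ q + b ^ q) := by
  lift a to NNReal using ha
  lift b to NNReal using hb
  exact_mod_cast NNReal.rpow_add_le_mul_rpow_add_rpow a b hq

/-- Bernoulli's inequality `1 + q s ≤ (1 + s) ^ q`, rescaled by `a`. -/
lemma rpow_add_mul_rpow_sub_one_mul_sub_le {a b q : ℝ} (ha : 0 ≤ a) (hb : 0 ≤ b) (hq : 1 ≤ q) :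
    a ^ q + q * a ^ (q - 1) * (b - a) ≤ b ^ q := by
  rcases ha.eq_or_lt with rfl | ha
  · rcases hq.eq_or_lt with rfl | hq
    · simp
    · simp [zero_rpow (by linarith : q ≠ 0), zero_rpow (by linarith : q - 1 ≠ 0),
        rpow_nonneg hb]
  have hbernoulli := one_add_mul_self_le_rpow_one_add (s := b / a - 1)
    (by linarith [div_nonneg hb ha.le]) hq
  rw [add_sub_cancel, div_rpow hb ha.le, le_div_iff₀ (rpow_pos_of_pos ha q)] at hbernoulli
  calc a ^ q + q * a ^ (q - 1) * (b - a) = (1 + q * (b / a - 1)) * a ^ q := by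
        rw [rpow_sub_one ha.ne']; field_simp
    _ ≤ b ^ q := hbernoulli

end Real

section InnerProductSpace

variable {E : Type*} [NormedAddCommGroup E] [InnerProductSpace ℝ E]

lemma norm_rpow_add_mul_inner_sub_le {p : ℝ} (hp : 1 ≤ p) (x z : E) :
    ‖x‖ ^ p + p * ‖x‖ ^ (p - 2) * inner ℝ x (z - x) ≤ ‖z‖ ^ p := by
  rcases eq_or_ne x 0 with rfl | hx
  · simp [zero_rpow (by linarith : p ≠ 0), rpow_nonneg (norm_nonneg z)]
  have hxn : 0 < ‖x‖ := norm_pos_iff.2 hx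
  have hinner : inner ℝ x (z - x) ≤ ‖x‖ * (‖z‖ - ‖x‖) := by
    rw [inner_sub_right, real_inner_self_eq_norm_mul_norm]
    nlinarith [real_inner_le_norm x z]
  have hpow : ‖x‖ ^ (p - 2) * ‖x‖ = ‖x‖ ^ (p - 1) := by
    rw [← rpow_add_one hxn.ne']; ring_nf
  calc ‖x‖ ^ p + p * ‖x‖ ^ (p - 2) * inner ℝ x (z - x)
      ≤ ‖x‖ ^ p + p * ‖x‖ ^ (p - 2) * (‖x‖ * (‖z‖ - ‖x‖)) := by
        gcongr
    _ = ‖x‖ ^ p + p * ‖x‖ ^ (p - 1) * (‖z‖ - ‖x‖) := by rw [← hpow]; ring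
    _ ≤ ‖z‖ ^ p := rpow_add_mul_rpow_sub_one_mul_sub_le hxn.le (norm_nonneg z) hp

/-- Clarkson's inequality in an inner product space. -/
lemma norm_add_rpow_add_norm_sub_rpow_le {p : ℝ} (hp : 2 ≤ p) (x y : E) :
    ‖x + y‖ ^ p + ‖x - y‖ ^ p ≤ 2 ^ (p - 1) * (‖x‖ ^ p + ‖y‖ ^ p) := by
  have hq : 1 ≤ p / 2 := by linarith
  have hsq (v : E) : ‖v‖ ^ p = (‖v‖ ^ 2) ^ (p / 2) := by
    rw [← rpow_natCast, ← rpow_mul (norm_nonneg v)]; push_cast; ring_nf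
  calc ‖x + y‖ ^ p + ‖x - y‖ ^ p
      ≤ (‖x + y‖ ^ 2 + ‖x - y‖ ^ 2) ^ (p / 2) := by
        rw [hsq, hsq]
        exact add_rpow_le_rpow_add (sq_nonneg _) (sq_nonneg _) hq
    _ = 2 ^ (p / 2) * (‖x‖ ^ 2 + ‖y‖ ^ 2) ^ (p / 2) := by
        rw [parallelogram_law_with_norm ℝ, mul_rpow zero_le_two (by positivity)]
    _ ≤ 2 ^ (p / 2) * (2 ^ (p / 2 - 1) * (‖x‖ ^ p + ‖y‖ ^ p)) := by
        rw [hsq x, hsq y]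
        gcongr
        exact rpow_add_le_mul_rpow_add_rpow (sq_nonneg _) (sq_nonneg _) hq
    _ = 2 ^ (p - 1) * (‖x‖ ^ p + ‖y‖ ^ p) := by
        rw [← mul_assoc, ← rpow_add two_pos]; ring_nf

lemma norm_rpow_add_mul_inner_add_mul_norm_sub_rpow_le {p : ℝ} (hp : 2 ≤ p) (x y : E) :
    ‖x‖ ^ p + p * ‖x‖ ^ (p - 2) * inner ℝ x (y - x) + 2 ^ (1 - p) * ‖y - x‖ ^ p ≤ ‖y‖ ^ p := by
  have htangent := norm_rpow_add_mul_inner_sub_le (p := p) (by linarith) x ((2 : ℝ)⁻¹ • (x + y))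
  have hclarkson := norm_add_rpow_add_norm_sub_rpow_le hp y x
  have hhalf : (2 : ℝ)⁻¹ • (x + y) - x = (2 : ℝ)⁻¹ • (y - x) := by module
  rw [hhalf, real_inner_smul_right, norm_smul, mul_rpow (by norm_num) (norm_nonneg _),
    norm_inv, Real.norm_two, inv_rpow zero_le_two, add_comm x y] at htangent
  rw [rpow_sub_one two_ne_zero] at hclarkson
  rw [rpow_sub two_pos, rpow_one]
  field_simp at htangent hclarkson ⊢
  linarith

end InnerProductSpace

/-- p-uniform convexity inequality for `s ↦ |s|^p`, `p ≥ 2`. -/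
theorem uniform_convexity_pow_norm (n : ℕ) (p : ℝ) (hp : 2 ≤ p) :
    ∃ c : ℝ, 0 < c ∧ ∀ x y : EuclideanSpace ℝ (Fin n),
      ‖x‖ ^ p + p * ‖x‖ ^ (p - 2) * (inner ℝ x (y - x) : ℝ) + c * ‖y - x‖ ^ p ≤ ‖y‖ ^ p :=
  ⟨2 ^ (1 - p), by positivity, norm_rpow_add_mul_inner_add_mul_norm_sub_rpow_le hp⟩
end

section
/- For all x, y in ℝ^n and 1 < p < 2, there exists c_p > 0 depending only on p such that |y|^p ≥ |x|^p + p |x|^{p-2} ⟨x, y - x⟩ + c_p |x - y|^2 (1 + |x| + |y|)^{p-2}. -/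
/-! With `a = ‖x‖`, `b = ‖y‖` and any `K ≥ a, b` (here `K = 1 + a + b`), the function
`t ↦ t ^ p - p (p - 1) / 2 * K ^ (p - 2) * t ^ 2` is convex on `[0, K]`, its second derivative
being `p (p - 1) (t ^ (p - 2) - K ^ (p - 2)) ≥ 0`; its tangent inequality at `a` is the
one-dimensional case with `c = p (p - 1) / 2`. For general `x, y` the defect
`D = a b - ⟪x, y⟫ ≥ 0` raises `‖x - y‖ ^ 2` by `2 D`, which costs `p (p - 1) K ^ (p - 2) D`, while
the inner-product term drops by the larger amount `p a ^ (p - 2) D`, as `a ≤ K` and `p - 2 ≤ 0`. -/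

open Set

theorem ConvexOn.add_mul_sub_le_of_hasDerivAt {S : Set ℝ} {f : ℝ → ℝ} {f' x y : ℝ}
    (hf : ConvexOn ℝ S f) (hx : x ∈ S) (hy : y ∈ S) (hf' : HasDerivAt f f' x) :
    f x + f' * (y - x) ≤ f y := by
  rcases lt_trichotomy x y with hxy | rfl | hyx
  · have := hf.le_slope_of_hasDerivAt hx hy hxy hf'
    rw [slope_def_field, le_div_iff₀ (sub_pos.2 hxy)] at this
    linarith
  · simp
  · have := hf.slope_le_of_hasDerivAt hy hx hyx hf'
    rw [slope_def_field, div_le_iff₀ (sub_pos.2 hyx)] at this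
    linarith

theorem convexOn_rpow_sub_mul_sq {p K : ℝ} (hp1 : 1 ≤ p) (hp2 : p ≤ 2) :
    ConvexOn ℝ (Icc 0 K) (fun t : ℝ => t ^ p - p * (p - 1) / 2 * K ^ (p - 2) * t ^ 2) := by
  refine convexOn_of_hasDerivWithinAt2_nonneg (convex_Icc 0 K)
    (f' := fun t => p * t ^ (p - 1) - p * (p - 1) * K ^ (p - 2) * t)
    (f'' := fun t => p * (p - 1) * t ^ (p - 2) - p * (p - 1) * K ^ (p - 2))
    ((Real.continuous_rpow_const (by linarith)).sub (by fun_prop)).continuousOn ?_ ?_ ?_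
  all_goals rw [interior_Icc]; rintro t ⟨ht0, htK⟩
  · exact ((Real.hasDerivAt_rpow_const (Or.inr hp1)).sub
      ((hasDerivAt_pow 2 t).const_mul _)).hasDerivWithinAt.congr_deriv (by push_cast; ring)
  · have hd := ((Real.hasDerivAt_rpow_const (p := p - 1) (Or.inl ht0.ne')).const_mul p).sub
      ((hasDerivAt_id t).const_mul (p * (p - 1) * K ^ (p - 2)))
    rw [show p - 1 - 1 = p - 2 by ring] at hd
    exact hd.hasDerivWithinAt.congr_deriv (by ring)
  · have hKt : K ^ (p - 2) ≤ t ^ (p - 2) := Real.rpow_le_rpow_of_nonpos ht0 htK.le (by linarith)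
    have := mul_le_mul_of_nonneg_left hKt (by nlinarith : 0 ≤ p * (p - 1))
    linarith

theorem rpow_add_mul_sub_add_mul_sq_le_rpow {p K a t : ℝ} (hp1 : 1 ≤ p) (hp2 : p ≤ 2)
    (ha : a ∈ Icc 0 K) (ht : t ∈ Icc 0 K) :
    a ^ p + p * a ^ (p - 1) * (t - a) + p * (p - 1) / 2 * K ^ (p - 2) * (t - a) ^ 2 ≤ t ^ p := by
  have hderiv := (Real.hasDerivAt_rpow_const (x := a) (Or.inr hp1)).sub
    ((hasDerivAt_pow 2 a).const_mul (p * (p - 1) / 2 * K ^ (p - 2)))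
  have := (convexOn_rpow_sub_mul_sq (K := K) hp1 hp2).add_mul_sub_le_of_hasDerivAt ha ht hderiv
  push_cast at this
  linear_combination this

theorem norm_rpow_add_inner_add_sq_le {E : Type*} [NormedAddCommGroup E] [InnerProductSpace ℝ E]
    {p K : ℝ} (hp1 : 1 < p) (hp2 : p ≤ 2) {x y : E} (hx : ‖x‖ ≤ K) (hy : ‖y‖ ≤ K) :
    ‖x‖ ^ p + p * ‖x‖ ^ (p - 2) * inner ℝ x (y - x)
      + p * (p - 1) / 2 * K ^ (p - 2) * ‖x - y‖ ^ 2 ≤ ‖y‖ ^ p := by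
  have hscalar :=
    rpow_add_mul_sub_add_mul_sq_le_rpow hp1.le hp2 ⟨norm_nonneg x, hx⟩ ⟨norm_nonneg y, hy⟩
  set a := ‖x‖
  set b := ‖y‖
  set D := a * b - inner ℝ x y
  have hD : 0 ≤ D := sub_nonneg.2 (real_inner_le_norm x y)
  have hinner : inner ℝ x (y - x) = a * (b - a) - D := by
    rw [inner_sub_right, real_inner_self_eq_norm_sq]; ring
  have hsq : ‖x - y‖ ^ 2 = (b - a) ^ 2 + 2 * D := by
    rw [norm_sub_sq_real]; ring
  have hpow : a ^ (p - 1) = a ^ (p - 2) * a := by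
    rw [← Real.rpow_add_one' (norm_nonneg x) (by linarith)]
    congr 1; ring
  have hangle : p * (p - 1) * K ^ (p - 2) * D ≤ p * a ^ (p - 2) * D := by
    rcases (norm_nonneg x).eq_or_lt with ha | ha
    · have hx0 : x = 0 := norm_eq_zero.1 ha.symm
      simp [D, a, hx0]
    · have hKa : K ^ (p - 2) ≤ a ^ (p - 2) := Real.rpow_le_rpow_of_nonpos ha hx (by linarith)
      have hK : 0 ≤ K ^ (p - 2) := Real.rpow_nonneg (ha.le.trans hx) _
      gcongr
      nlinarith
  rw [hpow] at hscalar
  rw [hinner, hsq]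
  linear_combination hscalar + hangle

/-- Modulus-of-convexity inequality for `s ↦ |s|^p` in the range `1 < p < 2`. -/
theorem convexity_pow_norm_singular (n : ℕ) (p : ℝ) (hp1 : 1 < p) (hp2 : p < 2) :
    ∃ c : ℝ, 0 < c ∧ ∀ x y : EuclideanSpace ℝ (Fin n),
      ‖x‖ ^ p + p * ‖x‖ ^ (p - 2) * (inner ℝ x (y - x) : ℝ)
          + c * ‖x - y‖ ^ (2 : ℝ) * (1 + ‖x‖ + ‖y‖) ^ (p - 2) ≤ ‖y‖ ^ p := by
  refine ⟨p * (p - 1) / 2, by nlinarith, fun x y => ?_⟩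
  have h := norm_rpow_add_inner_add_sq_le (K := 1 + ‖x‖ + ‖y‖) hp1 hp2.le
    (x := x) (y := y) (by linarith [norm_nonneg y]) (by linarith [norm_nonneg x])
  rw [Real.rpow_two]
  linarith
end

section
/- Let ε > 0, η > 0, G : (0,1) → [G_0, G_1] measurable with 0 < G_0 ≤ G_1, and let R^ε = {(x,y) : x ∈ (0,1), 0 < y < εG(x)}. For u ∈ W^{1,p}(R^ε) with 1 < p < ∞ and ε < 1, define (P_{1+η}u)(x,y) = u(x, y/(1+η)). Then ε^{-1/p} ||u - P_{1+η}u||_{L^p(R^ε)} ≤ ε^{-1/p} ||∂_y u||_{L^p(R^ε)} · (η/(1+η))^{1/p'} · G_1 / p^{1/p}, where p' = p/(p-1). -/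
open MeasureTheory

/-- Second partial derivative of a function on `ℝ × ℝ`. -/
noncomputable def pderiv₂ (φ : ℝ × ℝ → ℝ) (q : ℝ × ℝ) : ℝ := fderiv ℝ φ q (0, 1)

open Set

/-!
On each vertical segment, `u(x,y) - u(x,y/(1+η))` is the integral of `∂_y u` over an interval of
length `η y/(1+η)`, so Hölder's inequality bounds its `p`-th power by
`(η y/(1+η))^(p-1) ∫ |∂_y u(x,·)|^p`. Integrating `y^(p-1)` over `(0, εG(x)) ⊆ (0, G₁)` gives the
factor `G₁^p/p`, and Fubini over the region between the graphs of `0` and `εG` sums the slices.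
-/

theorem abs_setIntegral_rpow_le {α : Type*} [MeasurableSpace α] {μ : Measure α} {s : Set α}
    {f : α → ℝ} {p : ℝ} (hp : 1 < p) (hs : μ s ≠ ⊤) (hf : AEStronglyMeasurable f (μ.restrict s))
    (hfp : IntegrableOn (fun x => |f x| ^ p) s μ) :
    |∫ x in s, f x ∂μ| ^ p ≤ μ.real s ^ (p - 1) * ∫ x in s, |f x| ^ p ∂μ := by
  have hp0 : 0 < p := by linarith
  have hpq : p.HolderConjugate (p / (p - 1)) := .conjExponent hp
  have : IsFiniteMeasure (μ.restrict s) := isFiniteMeasure_restrict.mpr hs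
  have hfLp : MemLp f (ENNReal.ofReal p) (μ.restrict s) := by
    rw [← integrable_norm_rpow_iff hf (by simpa using hp0) ENNReal.ofReal_ne_top,
      ENNReal.toReal_ofReal hp0.le]
    simpa only [Real.norm_eq_abs] using hfp.integrable
  have hHolder := integral_mul_norm_le_Lp_mul_Lq hpq hfLp (memLp_const (1 : ℝ))
  simp only [norm_one, mul_one, Real.one_rpow, integral_const, smul_eq_mul,
    measureReal_restrict_apply_univ, Real.norm_eq_abs] at hHolder
  have hI : 0 ≤ ∫ x in s, |f x| ^ p ∂μ := integral_nonneg fun x => by positivity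
  calc |∫ x in s, f x ∂μ| ^ p
      ≤ ((∫ x in s, |f x| ^ p ∂μ) ^ (1 / p) * μ.real s ^ (1 / (p / (p - 1)))) ^ p := by
        gcongr
        exact (abs_integral_le_integral_abs).trans hHolder
    _ = μ.real s ^ (p - 1) * ∫ x in s, |f x| ^ p ∂μ := by
        rw [Real.mul_rpow (by positivity) (by positivity), ← Real.rpow_mul hI,
          ← Real.rpow_mul measureReal_nonneg, one_div_mul_cancel hp0.ne', Real.rpow_one,
          mul_comm]
        congr 2
        field_simp

theorem abs_sub_rpow_le_of_hasDerivAt {v v' : ℝ → ℝ} {a b p : ℝ} (hp : 1 < p) (hab : a ≤ b)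
    (hv : ∀ t ∈ Icc a b, HasDerivAt v (v' t) t)
    (hv'm : AEStronglyMeasurable v' (volume.restrict (Ioc a b)))
    (hv'p : IntegrableOn (fun t => |v' t| ^ p) (Ioc a b)) :
    |v b - v a| ^ p ≤ (b - a) ^ (p - 1) * ∫ t in Ioc a b, |v' t| ^ p := by
  have hv'int : IntervalIntegrable v' volume a b := by
    rw [intervalIntegrable_iff_integrableOn_Ioc_of_le hab]
    have := integrable_norm_rpow_of_le hv'm zero_le_one (by linarith) hp.le
      (by simpa only [Real.norm_eq_abs] using hv'p.integrable)
    exact (integrable_norm_iff hv'm).mp (by simpa only [Real.rpow_one] using this)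
  rw [← intervalIntegral.integral_eq_sub_of_hasDerivAt (fun t ht => hv t (uIcc_of_le hab ▸ ht))
    hv'int, intervalIntegral.integral_of_le hab, ← Real.volume_real_Ioc_of_le hab]
  exact abs_setIntegral_rpow_le hp measure_Ioc_lt_top.ne hv'm hv'p

section VerticalDilation

variable {v v' : ℝ → ℝ} {η p L : ℝ}

theorem abs_sub_comp_div_rpow_le (hp : 1 < p) (hη : 0 ≤ η)
    (hv : ∀ t ∈ Ioo 0 L, HasDerivAt v (v' t) t)
    (hv'm : AEStronglyMeasurable v' (volume.restrict (Ioo 0 L)))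
    (hv'p : IntegrableOn (fun t => |v' t| ^ p) (Ioo 0 L)) {y : ℝ} (hy : y ∈ Ioo 0 L) :
    |v y - v (y / (1 + η))| ^ p ≤ (η / (1 + η) * y) ^ (p - 1) * ∫ t in Ioo 0 L, |v' t| ^ p := by
  obtain ⟨hy0, hyL⟩ := hy
  have h1η : 0 < 1 + η := by linarith
  have ha0 : 0 < y / (1 + η) := by positivity
  have hay : y / (1 + η) ≤ y := div_le_self hy0.le (by linarith)
  have hsub : Icc (y / (1 + η)) y ⊆ Ioo 0 L := Icc_subset_Ioo ha0 hyL
  have hIoc : Ioc (y / (1 + η)) y ⊆ Ioo 0 L := Ioc_subset_Icc_self.trans hsub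
  have hlen : y - y / (1 + η) = η / (1 + η) * y := by field_simp; ring
  calc |v y - v (y / (1 + η))| ^ p
      ≤ (y - y / (1 + η)) ^ (p - 1) * ∫ t in Ioc (y / (1 + η)) y, |v' t| ^ p :=
        abs_sub_rpow_le_of_hasDerivAt hp hay (fun t ht => hv t (hsub ht))
          (hv'm.mono_set hIoc) (hv'p.mono_set hIoc)
    _ ≤ (η / (1 + η) * y) ^ (p - 1) * ∫ t in Ioo 0 L, |v' t| ^ p := by
        rw [hlen]
        gcongr
        exact .of_forall fun t => by positivity

theorem setIntegral_abs_sub_comp_div_rpow_le (hp : 1 < p) (hη : 0 ≤ η)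
    (hv : ∀ t ∈ Ioo 0 L, HasDerivAt v (v' t) t)
    (hv'm : AEStronglyMeasurable v' (volume.restrict (Ioo 0 L)))
    (hv'p : IntegrableOn (fun t => |v' t| ^ p) (Ioo 0 L))
    (hvp : IntegrableOn (fun y => |v y - v (y / (1 + η))| ^ p) (Ioo 0 L)) {M : ℝ} (hLM : L ≤ M) :
    ∫ y in Ioo 0 L, |v y - v (y / (1 + η))| ^ p
      ≤ (η / (1 + η)) ^ (p - 1) * M ^ p / p * ∫ t in Ioo 0 L, |v' t| ^ p := by
  rcases le_or_gt L 0 with hL | hL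
  · simp [Ioo_eq_empty_of_le hL]
  have hp0 : 0 < p := by linarith
  have hc : 0 ≤ η / (1 + η) := by positivity
  set B := ∫ t in Ioo 0 L, |v' t| ^ p
  have hB : 0 ≤ B := integral_nonneg fun t => by positivity
  have hpow : IntegrableOn (fun y : ℝ => y ^ (p - 1)) (Ioo 0 L) :=
    (intervalIntegral.intervalIntegrable_rpow' (by linarith)).1.mono_set Ioo_subset_Ioc_self
  calc ∫ y in Ioo 0 L, |v y - v (y / (1 + η))| ^ p
      ≤ ∫ y in Ioo 0 L, (η / (1 + η)) ^ (p - 1) * B * y ^ (p - 1) := by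
        refine setIntegral_mono_on hvp (hpow.const_mul _) measurableSet_Ioo fun y hy => ?_
        refine (abs_sub_comp_div_rpow_le hp hη hv hv'm hv'p hy).trans_eq ?_
        rw [Real.mul_rpow hc hy.1.le]
        ring
    _ = (η / (1 + η)) ^ (p - 1) * B * (L ^ p / p) := by
        rw [integral_const_mul, ← integral_Ioc_eq_integral_Ioo,
          ← intervalIntegral.integral_of_le hL.le, integral_rpow (Or.inl (by linarith)),
          sub_add_cancel, Real.zero_rpow hp0.ne', sub_zero]
    _ ≤ (η / (1 + η)) ^ (p - 1) * M ^ p / p * B := by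
        rw [mul_div_assoc, mul_right_comm]
        gcongr

end VerticalDilation

section RegionBetween

variable {α : Type*} {f g : α → ℝ} {s : Set α}

theorem indicator_regionBetween_slice (K : α × ℝ → ℝ) (x : α) :
    (fun y => (regionBetween f g s).indicator K (x, y)) =
      s.indicator (fun x => (Ioo (f x) (g x)).indicator (fun y => K (x, y))) x := by
  by_cases hx : x ∈ s <;> ext y <;> simp [indicator, regionBetween, hx]

variable [MeasurableSpace α] {μ : Measure α}

theorem setIntegral_regionBetween_le_mul [SFinite μ] (hf : Measurable f) (hg : Measurable g)
    (hs : MeasurableSet s) {F H : α × ℝ → ℝ}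
    (hF : IntegrableOn F (regionBetween f g s) (μ.prod volume))
    (hH : IntegrableOn H (regionBetween f g s) (μ.prod volume)) {C : ℝ}
    (hslice : ∀ x ∈ s, IntegrableOn (fun y => F (x, y)) (Ioo (f x) (g x)) →
      IntegrableOn (fun y => H (x, y)) (Ioo (f x) (g x)) →
      ∫ y in Ioo (f x) (g x), F (x, y) ≤ C * ∫ y in Ioo (f x) (g x), H (x, y)) :
    ∫ q in regionBetween f g s, F q ∂μ.prod volume
      ≤ C * ∫ q in regionBetween f g s, H q ∂μ.prod volume := by
  have hR := measurableSet_regionBetween hf hg hs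
  rw [← integrable_indicator_iff hR] at hF hH
  rw [← integral_indicator hR, ← integral_indicator hR, integral_prod _ hF, integral_prod _ hH,
    ← integral_const_mul]
  refine integral_mono_ae hF.integral_prod_left (hH.integral_prod_left.const_mul C) ?_
  filter_upwards [hF.prod_right_ae, hH.prod_right_ae] with x hFx hHx
  simp only [indicator_regionBetween_slice] at hFx hHx ⊢
  by_cases hx : x ∈ s
  · simp only [indicator_of_mem hx] at hFx hHx ⊢
    rw [integral_indicator measurableSet_Ioo, integral_indicator measurableSet_Ioo]
    exact hslice x hx ((integrable_indicator_iff measurableSet_Ioo).1 hFx)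
      ((integrable_indicator_iff measurableSet_Ioo).1 hHx)
  · simp [indicator_of_notMem hx]

end RegionBetween

theorem hasDerivAt_pderiv₂ {φ : ℝ × ℝ → ℝ} {x t : ℝ} (hφ : DifferentiableAt ℝ φ (x, t)) :
    HasDerivAt (fun t => φ (x, t)) (pderiv₂ φ (x, t)) t :=
  hφ.hasFDerivAt.comp_hasDerivAt t ((hasDerivAt_const t x).prodMk (hasDerivAt_id t))

theorem measurable_pderiv₂_comp_prodMk_left (φ : ℝ × ℝ → ℝ) (x : ℝ) :
    Measurable fun t => pderiv₂ φ (x, t) :=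
  (measurable_fderiv_apply_const ℝ φ (0, 1)).comp measurable_prodMk_left

/-- Estimate for `u - P_{1+η}u` in `L^p` over the thin domain
`R^ε = {(x,y) : x ∈ (0,1), 0 < y < εG(x)}`, where `(P_{1+η}u)(x,y) = u(x, y/(1+η))`:
`ε^{-1/p} ‖u - P_{1+η}u‖_{L^p(R^ε)}
  ≤ ε^{-1/p} ‖∂_y u‖_{L^p(R^ε)} (η/(1+η))^{1/p'} G₁ / p^{1/p}`. -/
theorem thin_domain_vertical_translation_estimate
    (p ε η G₀ G₁ : ℝ) (hp : 1 < p) (hε : 0 < ε) (hε1 : ε < 1) (hη : 0 < η)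
    (hG₀ : 0 < G₀) (hG₀₁ : G₀ ≤ G₁)
    (G : ℝ → ℝ) (hGm : Measurable G)
    (hGb : ∀ x ∈ Set.Ioo (0 : ℝ) 1, G₀ ≤ G x ∧ G x ≤ G₁)
    (u : ℝ × ℝ → ℝ) (hu : Differentiable ℝ u)
    (R : Set (ℝ × ℝ))
    (hR : R = {q : ℝ × ℝ | q.1 ∈ Set.Ioo (0 : ℝ) 1 ∧ q.2 ∈ Set.Ioo 0 (ε * G q.1)})
    (hint1 : IntegrableOn (fun q => |u q - u (q.1, q.2 / (1 + η))| ^ p) R volume)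
    (hint2 : IntegrableOn (fun q => |pderiv₂ u q| ^ p) R volume) :
    ε ^ (-(1 / p)) * (∫ q in R, |u q - u (q.1, q.2 / (1 + η))| ^ p) ^ (1 / p)
      ≤ ε ^ (-(1 / p)) * (∫ q in R, |pderiv₂ u q| ^ p) ^ (1 / p)
        * (η / (1 + η)) ^ (1 - 1 / p) * G₁ / p ^ (1 / p) := by
  have hp0 : 0 < p := by linarith
  have hc : 0 ≤ η / (1 + η) := by positivity
  have hG₁ : 0 ≤ G₁ := hG₀.le.trans hG₀₁
  have hheight : ∀ x ∈ Ioo (0 : ℝ) 1, ε * G x ≤ G₁ := fun x hx => by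
    nlinarith [hGb x hx]
  have hR' : R = regionBetween 0 (fun x => ε * G x) (Ioo 0 1) := hR
  have hmain : ∫ q in R, |u q - u (q.1, q.2 / (1 + η))| ^ p
      ≤ (η / (1 + η)) ^ (p - 1) * G₁ ^ p / p * ∫ q in R, |pderiv₂ u q| ^ p := by
    rw [hR', Measure.volume_eq_prod] at hint1 hint2 ⊢
    exact setIntegral_regionBetween_le_mul measurable_const (measurable_const.mul hGm)
      measurableSet_Ioo hint1 hint2 fun x hx hFx hHx =>
        setIntegral_abs_sub_comp_div_rpow_le hp hη.le (fun t _ => hasDerivAt_pderiv₂ (hu (x, t)))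
          (measurable_pderiv₂_comp_prodMk_left u x).aestronglyMeasurable hHx hFx (hheight x hx)
  have hconst : ((η / (1 + η)) ^ (p - 1) * G₁ ^ p / p) ^ (1 / p)
      = (η / (1 + η)) ^ (1 - 1 / p) * G₁ / p ^ (1 / p) := by
    rw [Real.div_rpow (by positivity) hp0.le, Real.mul_rpow (by positivity) (by positivity),
      ← Real.rpow_mul hc, ← Real.rpow_mul hG₁, sub_mul, one_mul, mul_one_div_cancel hp0.ne',
      Real.rpow_one]
  calc _ ≤ ε ^ (-(1 / p))
        * ((η / (1 + η)) ^ (p - 1) * G₁ ^ p / p * ∫ q in R, |pderiv₂ u q| ^ p) ^ (1 / p) := by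
        gcongr
    _ = _ := by
        rw [Real.mul_rpow (by positivity) (by positivity), hconst]
        ring
end

section
/- Let 1 < p < ∞ and let Y* = {(y₁,y₂) : 0 < y₁ < L, 0 < y₂ < G(y₁)} where G : ℝ → [G_0, G_1] is a C¹ L-periodic function with 0 < G_0 ≤ G_1. Suppose v ∈ W^{1,p}(Y*) satisfies: (v - y₁) belongs to the subspace W^{1,p}_#(Y*) of functions with equal traces on the left and right lateral boundaries, and ∫_{Y*} |∇v|^{p-2} ∇v · ∇φ dy = 0 for all φ ∈ W^{1,p}_#(Y*). Then q := L^{-1} ∫_{Y*} |∇v|^{p-2} ∂_{y₁} v dy₁ dy₂ satisfies q = L^{-1} ∫_{Y*} |∇v|^p dy₁ dy₂ > 0. -/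
open MeasureTheory

/-- First partial derivative of a function on `ℝ × ℝ`. -/
noncomputable def pderiv₁ (φ : ℝ × ℝ → ℝ) (q : ℝ × ℝ) : ℝ := fderiv ℝ φ q (1, 0)

/-!
Testing the cell equation with the admissible function `φ = v - y₁` turns
`∫ |∇v|^{p-2} ∇v · ∇φ = 0` into `∫ |∇v|^{p-2} ∂₁v = ∫ |∇v|^{p-2} |∇v|² = ∫ |∇v|^p`.
For positivity, `∇v` cannot vanish on the rectangle `(0, L) × (0, G₀) ⊆ Y*`: otherwise `v`
would be constant on its closure, whereas `v(L, y₂) = v(0, y₂) + L`. Since `|∇v|^p` is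
continuous, it is then positive on a nonempty open subset of `Y*`.
-/

open Set

noncomputable def gradNorm (v : ℝ × ℝ → ℝ) (q : ℝ × ℝ) : ℝ :=
  √(pderiv₁ v q ^ 2 + pderiv₂ v q ^ 2)

lemma Real.rpow_sub_two_mul_sq {x p : ℝ} (hx : 0 ≤ x) (hp : 0 < p) :
    x ^ (p - 2) * x ^ 2 = x ^ p := by
  rw [← Real.rpow_two, ← Real.rpow_add' hx (by linarith), sub_add_cancel]

lemma Real.abs_rpow_sub_two_mul_le {x a p : ℝ} (ha : |a| ≤ x) (hp : 1 < p) :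
    |x ^ (p - 2) * a| ≤ x ^ (p - 1) := by
  have hx : 0 ≤ x := (abs_nonneg a).trans ha
  calc |x ^ (p - 2) * a| = x ^ (p - 2) * |a| := by
        rw [abs_mul, abs_of_nonneg (Real.rpow_nonneg hx _)]
    _ ≤ x ^ (p - 2) * x ^ (1 : ℝ) := by
        rw [Real.rpow_one]; exact mul_le_mul_of_nonneg_left ha (Real.rpow_nonneg hx _)
    _ = x ^ (p - 1) := by
        rw [← Real.rpow_add' hx (by linarith)]; ring_nf

lemma pderiv₁_sub_fst {v : ℝ × ℝ → ℝ} {q : ℝ × ℝ} (hv : DifferentiableAt ℝ v q) :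
    pderiv₁ (fun q ↦ v q - q.1) q = pderiv₁ v q - 1 := by
  rw [pderiv₁, fderiv_fun_sub hv differentiableAt_fst, fderiv_fst]
  simp [pderiv₁]

lemma pderiv₂_sub_fst {v : ℝ × ℝ → ℝ} {q : ℝ × ℝ} (hv : DifferentiableAt ℝ v q) :
    pderiv₂ (fun q ↦ v q - q.1) q = pderiv₂ v q := by
  rw [pderiv₂, fderiv_fun_sub hv differentiableAt_fst, fderiv_fst]
  simp [pderiv₂]

lemma abs_pderiv₁_le_gradNorm (v : ℝ × ℝ → ℝ) (q : ℝ × ℝ) : |pderiv₁ v q| ≤ gradNorm v q :=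
  Real.abs_le_sqrt (le_add_of_nonneg_right (sq_nonneg _))

lemma gradNorm_pos {v : ℝ × ℝ → ℝ} {q : ℝ × ℝ} (h : fderiv ℝ v q ≠ 0) : 0 < gradNorm v q := by
  refine Real.sqrt_pos.2 ?_
  contrapose! h
  have h₁ : pderiv₁ v q = 0 := by nlinarith [sq_nonneg (pderiv₁ v q), sq_nonneg (pderiv₂ v q)]
  have h₂ : pderiv₂ v q = 0 := by nlinarith [sq_nonneg (pderiv₁ v q), sq_nonneg (pderiv₂ v q)]
  exact ContinuousLinearMap.prod_ext (ContinuousLinearMap.ext_ring h₁)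
    (ContinuousLinearMap.ext_ring h₂)

lemma ContDiff.continuous_pderiv₁ {v : ℝ × ℝ → ℝ} (hv : ContDiff ℝ 1 v) :
    Continuous (pderiv₁ v) :=
  (hv.continuous_fderiv one_ne_zero).clm_apply continuous_const

lemma ContDiff.continuous_pderiv₂ {v : ℝ × ℝ → ℝ} (hv : ContDiff ℝ 1 v) :
    Continuous (pderiv₂ v) :=
  (hv.continuous_fderiv one_ne_zero).clm_apply continuous_const

lemma ContDiff.continuous_gradNorm {v : ℝ × ℝ → ℝ} (hv : ContDiff ℝ 1 v) :
    Continuous (gradNorm v) :=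
  ((hv.continuous_pderiv₁.pow 2).add (hv.continuous_pderiv₂.pow 2)).sqrt

lemma gradNorm_rpow_sub_two_mul_sq {v : ℝ × ℝ → ℝ} {p : ℝ} (hp : 0 < p) (q : ℝ × ℝ) :
    gradNorm v q ^ (p - 2) * (pderiv₁ v q ^ 2 + pderiv₂ v q ^ 2) = gradNorm v q ^ p := by
  rw [← Real.sq_sqrt (by positivity : 0 ≤ pderiv₁ v q ^ 2 + pderiv₂ v q ^ 2)]
  exact Real.rpow_sub_two_mul_sq (Real.sqrt_nonneg _) hp

lemma flux_inner_grad_sub_fst {v : ℝ × ℝ → ℝ} {p : ℝ} (hv : Differentiable ℝ v) (hp : 0 < p)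
    (q : ℝ × ℝ) :
    gradNorm v q ^ (p - 2) * (pderiv₁ v q * pderiv₁ (fun q ↦ v q - q.1) q
      + pderiv₂ v q * pderiv₂ (fun q ↦ v q - q.1) q)
      = gradNorm v q ^ p - gradNorm v q ^ (p - 2) * pderiv₁ v q := by
  rw [pderiv₁_sub_fst (hv q), pderiv₂_sub_fst (hv q), ← gradNorm_rpow_sub_two_mul_sq hp q]
  ring

lemma exists_fderiv_ne_zero_of_add_period {v : ℝ × ℝ → ℝ} (hv : Differentiable ℝ v) {L c d : ℝ}
    (hL : 0 < L) (hcd : c < d) (hvper : ∀ q : ℝ × ℝ, v (q.1 + L, q.2) = v q + L) :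
    ∃ q ∈ Ioo 0 L ×ˢ Ioo c d, fderiv ℝ v q ≠ 0 := by
  by_contra! h
  obtain ⟨a, ha⟩ := (isOpen_Ioo.prod isOpen_Ioo).exists_is_const_of_fderiv_eq_zero
    ((convex_Ioo 0 L).prod (convex_Ioo c d)).isPreconnected hv.differentiableOn h
  have hconst : EqOn v (fun _ ↦ a) (Icc 0 L ×ˢ Icc c d) := by
    rw [← closure_Ioo hL.ne, ← closure_Ioo hcd.ne, ← closure_prod_eq]
    exact EqOn.closure ha hv.continuous continuous_const
  have hy : (c + d) / 2 ∈ Icc c d := ⟨by linarith, by linarith⟩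
  have := hvper (0, (c + d) / 2)
  rw [zero_add, hconst ⟨right_mem_Icc.2 hL.le, hy⟩, hconst ⟨left_mem_Icc.2 hL.le, hy⟩] at this
  linarith

lemma setIntegral_pos_of_pos_on_open {X : Type*} [TopologicalSpace X] [MeasurableSpace X]
    [OpensMeasurableSpace X] {μ : Measure X} [μ.IsOpenPosMeasure] {f : X → ℝ} {s U : Set X}
    {x : X} (hf : Continuous f) (hf0 : ∀ y, 0 ≤ f y) (hfs : IntegrableOn f s μ) (hU : IsOpen U)
    (hUs : U ⊆ s) (hx : x ∈ U) (hfx : 0 < f x) : 0 < ∫ y in s, f y ∂μ := by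
  have hfU : 0 < ∫ y in U, f y ∂μ := by
    rw [setIntegral_pos_iff_support_of_nonneg_ae (ae_of_all _ hf0) (hfs.mono_set hUs)]
    exact (hf.isOpen_support.inter hU).measure_pos μ ⟨x, hfx.ne', hx⟩
  exact hfU.trans_le (setIntegral_mono_set hfs (ae_of_all _ hf0) (ae_of_all _ hUs))

lemma integrableOn_gradNorm_rpow {v : ℝ × ℝ → ℝ} {p : ℝ} {s : Set (ℝ × ℝ)}
    (hv : ContDiff ℝ 1 v) (hp : 0 ≤ p) (hs : Bornology.IsBounded s) :
    IntegrableOn (fun q ↦ gradNorm v q ^ p) s :=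
  ((hv.continuous_gradNorm.rpow_const fun _ ↦ Or.inr hp).continuousOn.integrableOn_compact
    hs.isCompact_closure).mono_set subset_closure

lemma integrableOn_gradNorm_rpow_sub_two_mul_pderiv₁ {v : ℝ × ℝ → ℝ} {p : ℝ}
    {s : Set (ℝ × ℝ)} (hv : ContDiff ℝ 1 v) (hp : 1 < p) (hs : Bornology.IsBounded s) :
    IntegrableOn (fun q ↦ gradNorm v q ^ (p - 2) * pderiv₁ v q) s :=
  (integrableOn_gradNorm_rpow hv (by linarith) hs).mono'
    ((hv.continuous_gradNorm.measurable.pow_const _).mul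
      hv.continuous_pderiv₁.measurable).aestronglyMeasurable
    (ae_of_all _ fun q ↦ Real.abs_rpow_sub_two_mul_le (abs_pderiv₁_le_gradNorm v q) hp)

theorem cell_problem_coefficient_positive_general
    (p L G₀ G₁ : ℝ) (hp : 1 < p) (hL : 0 < L) (hG₀ : 0 < G₀)
    (G : ℝ → ℝ)
    (hGb : ∀ x, G₀ ≤ G x ∧ G x ≤ G₁)
    (Y : Set (ℝ × ℝ))
    (hY : Y = {q : ℝ × ℝ | q.1 ∈ Set.Ioo 0 L ∧ q.2 ∈ Set.Ioo 0 (G q.1)})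
    (v : ℝ × ℝ → ℝ) (hv : ContDiff ℝ 1 v)
    (hvper : ∀ q : ℝ × ℝ, v (q.1 + L, q.2) = v q + L)
    (hvar : ∀ φ : ℝ × ℝ → ℝ, ContDiff ℝ 1 φ → (∀ q : ℝ × ℝ, φ (q.1 + L, q.2) = φ q) →
      ∫ q in Y, Real.sqrt ((pderiv₁ v q) ^ 2 + (pderiv₂ v q) ^ 2) ^ (p - 2)
        * (pderiv₁ v q * pderiv₁ φ q + pderiv₂ v q * pderiv₂ φ q) = 0) :
    L⁻¹ * ∫ q in Y, Real.sqrt ((pderiv₁ v q) ^ 2 + (pderiv₂ v q) ^ 2) ^ (p - 2)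
        * pderiv₁ v q
      = L⁻¹ * ∫ q in Y, Real.sqrt ((pderiv₁ v q) ^ 2 + (pderiv₂ v q) ^ 2) ^ p ∧
    0 < L⁻¹ * ∫ q in Y, Real.sqrt ((pderiv₁ v q) ^ 2 + (pderiv₂ v q) ^ 2) ^ p := by
  change L⁻¹ * ∫ q in Y, gradNorm v q ^ (p - 2) * pderiv₁ v q
      = L⁻¹ * ∫ q in Y, gradNorm v q ^ p ∧ 0 < L⁻¹ * ∫ q in Y, gradNorm v q ^ p
  have hv' : Differentiable ℝ v := hv.differentiable one_ne_zero
  have hYb : Bornology.IsBounded Y := by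
    refine ((Metric.isBounded_Icc 0 L).prod (Metric.isBounded_Icc 0 G₁)).subset fun q hq ↦ ?_
    rw [hY] at hq
    exact ⟨Ioo_subset_Icc_self hq.1, hq.2.1.le, hq.2.2.le.trans (hGb q.1).2⟩
  have hSY : Ioo 0 L ×ˢ Ioo 0 G₀ ⊆ Y := fun q hq ↦ by
    rw [hY]
    exact ⟨hq.1, hq.2.1, hq.2.2.trans_le (hGb q.1).1⟩
  have hf := integrableOn_gradNorm_rpow (p := p) hv (by linarith) hYb
  have hflux : ∫ q in Y, (gradNorm v q ^ p - gradNorm v q ^ (p - 2) * pderiv₁ v q) = 0 := by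
    rw [← hvar (fun q ↦ v q - q.1) (hv.sub contDiff_fst) fun q ↦ by rw [hvper]; ring]
    exact integral_congr_ae (ae_of_all _ fun q ↦
      (flux_inner_grad_sub_fst hv' (by linarith) q).symm)
  rw [integral_sub hf (integrableOn_gradNorm_rpow_sub_two_mul_pderiv₁ hv hp hYb),
    sub_eq_zero] at hflux
  obtain ⟨q₀, hq₀S, hq₀⟩ := exists_fderiv_ne_zero_of_add_period hv' hL hG₀ hvper
  refine ⟨congrArg _ hflux.symm, mul_pos (inv_pos.2 hL) ?_⟩
  exact setIntegral_pos_of_pos_on_open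
    (hv.continuous_gradNorm.rpow_const fun _ ↦ Or.inr (by linarith))
    (fun _ ↦ Real.rpow_nonneg (Real.sqrt_nonneg _) _) hf (isOpen_Ioo.prod isOpen_Ioo) hSY hq₀S
    (Real.rpow_pos_of_pos (gradNorm_pos hq₀) p)

/-- For the solution `v` of the cell problem on
`Y* = {(y₁,y₂) : 0 < y₁ < L, 0 < y₂ < G(y₁)}` (periodicity in `y₁` being encoded by the
`L`-periodic extensions `v(y₁+L,y₂) = v(y₁,y₂) + L` and `φ(y₁+L,y₂) = φ(y₁,y₂)` of
`v - y₁` and of the test functions), the homogenized coefficient satisfies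
`q = L⁻¹ ∫_{Y*} |∇v|^{p-2} ∂_{y₁}v = L⁻¹ ∫_{Y*} |∇v|^p > 0`. -/
theorem cell_problem_coefficient_positive
    (p L G₀ G₁ : ℝ) (hp : 1 < p) (hL : 0 < L) (hG₀ : 0 < G₀) (hG₀₁ : G₀ ≤ G₁)
    (G : ℝ → ℝ) (hG : ContDiff ℝ 1 G) (hGper : ∀ x, G (x + L) = G x)
    (hGb : ∀ x, G₀ ≤ G x ∧ G x ≤ G₁)
    (Y : Set (ℝ × ℝ))
    (hY : Y = {q : ℝ × ℝ | q.1 ∈ Set.Ioo 0 L ∧ q.2 ∈ Set.Ioo 0 (G q.1)})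
    (v : ℝ × ℝ → ℝ) (hv : ContDiff ℝ 1 v)
    (hvper : ∀ q : ℝ × ℝ, v (q.1 + L, q.2) = v q + L)
    (hvar : ∀ φ : ℝ × ℝ → ℝ, ContDiff ℝ 1 φ → (∀ q : ℝ × ℝ, φ (q.1 + L, q.2) = φ q) →
      ∫ q in Y, Real.sqrt ((pderiv₁ v q) ^ 2 + (pderiv₂ v q) ^ 2) ^ (p - 2)
        * (pderiv₁ v q * pderiv₁ φ q + pderiv₂ v q * pderiv₂ φ q) = 0) :
    L⁻¹ * ∫ q in Y, Real.sqrt ((pderiv₁ v q) ^ 2 + (pderiv₂ v q) ^ 2) ^ (p - 2)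
        * pderiv₁ v q
      = L⁻¹ * ∫ q in Y, Real.sqrt ((pderiv₁ v q) ^ 2 + (pderiv₂ v q) ^ 2) ^ p ∧
    0 < L⁻¹ * ∫ q in Y, Real.sqrt ((pderiv₁ v q) ^ 2 + (pderiv₂ v q) ^ 2) ^ p :=
  cell_problem_coefficient_positive_general p L G₀ G₁ hp hL hG₀ G hGb Y hY v hv hvper hvar
end
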